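/- arXiv:1312.4163 — 3 statements merged into one kernel-verified Lean document; each statement's English description precedes it below -/
import Mathlib

section
/- Let A be a real m×n matrix and b ∈ ℝ^m. If x is the unique least ℓ1-norm nonnegative solution to the system Ax = b, then the (m+1)×|J₊| matrix M obtained by appending the row e_{J₊}ᵀ (all ones) below the column submatrix A_{J₊} has full column rank, where J₊ = {i : xᵢ > 0}. -/
open Matrix

/-- `x` is the unique least ℓ1-norm nonnegative solution to the system `A x = b`. -/
def uniqueLeastL1 {m n : ℕ} (A : Matrix (Fin m) (Fin n) ℝ) (b : Fin m → ℝ)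
    (x : Fin n → ℝ) : Prop :=
  A.mulVec x = b ∧ 0 ≤ x ∧
    ∀ w : Fin n → ℝ, A.mulVec w = b → 0 ≤ w → w ≠ x → ∑ i, |x i| < ∑ i, |w i|

/-!
A linear dependence `c` among the columns of `M` is a direction with `A c = 0` and `∑ c = 0`
supported on `J₊`. Moving from `x` a small distance along `-c` keeps the point nonnegative and
solves `Ax = b`; on nonnegative vectors the ℓ1-norm is the linear functional `∑ xᵢ`, so the
norm does not change, and uniqueness forces `c = 0`.
-/

open Filter Topology

theorem exists_pos_nonneg_sub_smul {ι : Type*} [Finite ι] {x c : ι → ℝ} (hx : 0 ≤ x)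
    (hc : ∀ i, c i ≠ 0 → 0 < x i) : ∃ ε > (0 : ℝ), 0 ≤ x - ε • c := by
  have hnear : ∀ i, ∀ᶠ ε in 𝓝 (0 : ℝ), ε * c i ≤ x i := by
    intro i
    by_cases hci : c i = 0
    · simpa [hci] using hx i
    · refine ((continuous_id.mul continuous_const).tendsto' 0 0 (zero_mul _)).eventually_lt_const
        (hc i hci) |>.mono fun _ => le_of_lt
  have hpos : ∀ᶠ ε in 𝓝[>] (0 : ℝ), 0 < ε := self_mem_nhdsWithin
  obtain ⟨ε, hε, hle⟩ :=
    (hpos.and ((eventually_all.2 hnear).filter_mono nhdsWithin_le_nhds)).exists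
  exact ⟨ε, hε, fun i => sub_nonneg.2 (hle i)⟩

/-- Otherwise `x - ε • c` would be a second nonnegative solution with the same ℓ1-norm. -/
theorem uniqueLeastL1.eq_zero_of_mulVec_eq_zero {m n : ℕ} {A : Matrix (Fin m) (Fin n) ℝ}
    {b : Fin m → ℝ} {x : Fin n → ℝ} (h : uniqueLeastL1 A b x) {c : Fin n → ℝ}
    (hAc : A *ᵥ c = 0) (hsum : ∑ i, c i = 0) (hc : ∀ i, c i ≠ 0 → 0 < x i) : c = 0 := by
  obtain ⟨hAx, hx, hmin⟩ := h
  by_contra hc0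
  obtain ⟨ε, hε, hw⟩ := exists_pos_nonneg_sub_smul hx hc
  have hnorm : ∀ y : Fin n → ℝ, 0 ≤ y → ∑ i, |y i| = ∑ i, y i := fun y hy =>
    Finset.sum_congr rfl fun i _ => abs_of_nonneg (hy i)
  have hAw : A *ᵥ (x - ε • c) = b := by
    rw [mulVec_sub, mulVec_smul, hAc, smul_zero, sub_zero, hAx]
  have hne : x - ε • c ≠ x := by
    rw [Ne, sub_eq_self, smul_eq_zero, not_or]
    exact ⟨hε.ne', hc0⟩
  have := hmin _ hAw hw hne
  rw [hnorm x hx, hnorm _ hw] at this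
  simp [Finset.sum_sub_distrib, ← Finset.mul_sum, hsum] at this

/-- The (m+1)×|J₊| matrix `M` obtained by appending the all-ones row below the
column submatrix `A_{J₊}` has full column rank, i.e. its columns (indexed by
`J₊ = {i : x i > 0}`) are linearly independent. -/
theorem stmt_2 {m n : ℕ} (A : Matrix (Fin m) (Fin n) ℝ) (b : Fin m → ℝ)
    (x : Fin n → ℝ) (h : uniqueLeastL1 A b x) :
    LinearIndependent ℝ (fun j : {i : Fin n // 0 < x i} =>
      (Sum.elim (fun k : Fin m => A k j.1) (fun _ : Unit => (1 : ℝ)) :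
        Fin m ⊕ Unit → ℝ)) := by
  show LinearIndepOn ℝ
    (fun i => (Sum.elim (fun k => A k i) (fun _ => 1) : Fin m ⊕ Unit → ℝ)) {i | 0 < x i}
  refine linearIndepOn_iff.2 fun l hl hcomb => ?_
  rw [Finsupp.linearCombination_apply, Finsupp.sum_fintype _ _ (by simp)] at hcomb
  have hAl : A *ᵥ l = 0 := funext fun k => by
    simpa [mulVec, dotProduct, mul_comm] using congrFun hcomb (Sum.inl k)
  have hsum : ∑ i, l i = 0 := by simpa using congrFun hcomb (Sum.inr ())
  have hsupp : ∀ i, l i ≠ 0 → 0 < x i := fun i hi =>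
    not_not.1 fun hxi => hi ((Finsupp.mem_supported' ℝ l).1 hl i hxi)
  exact DFunLike.coe_injective (h.eq_zero_of_mulVec_eq_zero hAl hsum hsupp)
end

section
/- Let A be a real m×n matrix, b ∈ ℝ^m, and let x be a sparsest nonnegative solution to the system Ax = b with J₊ = {i : xᵢ > 0}. Then x is the unique least ℓ1-norm nonnegative solution to Ax = b if and only if there exists η ∈ R(Aᵀ) with ηᵢ = 1 for all i ∈ J₊ and ηᵢ < 1 for all i ∉ J₊. -/
/-!
If `x` is the unique minimiser of `w ↦ ∑ wᵢ` over the polyhedron `{w ≥ 0, A w = b}`, then every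
nonzero direction `d` with `A d = 0` and `d ≥ 0` off `J₊` strictly increases this sum. Farkas'
lemma, applied to a homogenised form of the system, turns the absence of bad directions into the
dual certificate `η = Aᵀ u`. Conversely, `η ⬝ w = η ⬝ x = ‖x‖₁` for every solution `w`, so
`‖w‖₁ > ‖x‖₁` as soon as `w` leaves `J₊`; and a solution supported on `J₊` equals `x`, because `A`
is injective on vectors supported on the support of a sparsest nonnegative solution.

Farkas' lemma comes from the separation theorem for closed cones; a finitely generated cone is
closed because, by Carathéodory's theorem, it is a finite union of linear images of orthants on
which the map is injective.
-/

open Matrix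

open Function Set Filter Topology

section Support

variable {𝕜 ι : Type*} [Field 𝕜] [LinearOrder 𝕜] [IsStrictOrderedRing 𝕜] [Fintype ι]

/-- The ratio test of the simplex method. -/
lemma exists_nonneg_sub_smul_support_ssubset {c d : ι → 𝕜} (hc : 0 ≤ c)
    (hdc : support d ⊆ support c) (hd : ∃ i, 0 < d i) :
    ∃ t : 𝕜, 0 ≤ c - t • d ∧ support (c - t • d) ⊂ support c := by
  classical
  obtain ⟨i₀, hi₀, hmin⟩ := (Finset.univ.filter fun i => 0 < d i).exists_min_image
    (fun i => c i / d i) (by simpa [Finset.Nonempty] using hd)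
  simp only [Finset.mem_filter, Finset.mem_univ, true_and] at hi₀ hmin
  set t := c i₀ / d i₀
  have ht : 0 ≤ t := div_nonneg (hc i₀) hi₀.le
  have hzero : (c - t • d) i₀ = 0 := by simp [t, hi₀.ne']
  refine ⟨t, fun i => ?_, ?_, fun hsub => hsub (hdc hi₀.ne') hzero⟩
  · rcases le_or_gt (d i) 0 with hdi | hdi
    · have := hc i
      simp only [Pi.sub_apply, Pi.smul_apply, smul_eq_mul, Pi.zero_apply] at this ⊢
      nlinarith
    · simpa [sub_nonneg] using (le_div_iff₀ hdi).1 (hmin i hdi)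
  · intro i hi
    by_contra hci
    have hdi : d i = 0 := not_not.1 fun h => hci (hdc h)
    exact hi (by simp [not_not.1 hci, hdi])

variable {M : Type*} [AddCommGroup M] [Module 𝕜 M]

lemma eq_zero_of_support_subset_of_minimal (f : (ι → 𝕜) →ₗ[𝕜] M) {c : ι → 𝕜} (hc : 0 ≤ c)
    (hmin : ∀ c', 0 ≤ c' → f c' = f c → (support c).ncard ≤ (support c').ncard)
    {d : ι → 𝕜} (hd : f d = 0) (hdc : support d ⊆ support c) : d = 0 := by
  have hno_pos : ∀ d : ι → 𝕜, f d = 0 → support d ⊆ support c → ¬ ∃ i, 0 < d i := by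
    intro d hd hdc hpos
    obtain ⟨t, hnonneg, hssub⟩ := exists_nonneg_sub_smul_support_ssubset hc hdc hpos
    exact (ncard_lt_ncard hssub (toFinite _)).not_ge (hmin _ hnonneg (by simp [hd]))
  by_contra hne
  obtain ⟨i, hi⟩ := Function.ne_iff.1 hne
  rcases lt_or_gt_of_ne hi with hneg | hpos
  · exact hno_pos (-d) (by simp [hd]) (by rwa [support_neg]) ⟨i, by simpa using hneg⟩
  · exact hno_pos d hd hdc ⟨i, hpos⟩

/-- Carathéodory's theorem for cones. -/
lemma exists_nonneg_eq_and_injective_on_support (f : (ι → 𝕜) →ₗ[𝕜] M) {c : ι → 𝕜}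
    (hc : 0 ≤ c) :
    ∃ c', 0 ≤ c' ∧ f c' = f c ∧ ∀ d, f d = 0 → support d ⊆ support c' → d = 0 := by
  obtain ⟨c', ⟨hc', hfc'⟩, hmin⟩ := (measure fun c : ι → 𝕜 => (support c).ncard).wf.has_min
    {c' | 0 ≤ c' ∧ f c' = f c} ⟨c, hc, rfl⟩
  refine ⟨c', hc', hfc', fun d => eq_zero_of_support_subset_of_minimal f hc' ?_⟩
  exact fun c'' hc'' hfc'' => not_lt.1 (hmin c'' ⟨hc'', hfc''.trans hfc'⟩)

end Support

section Closed

variable {ι E : Type*} [Fintype ι] [AddCommGroup E] [Module ℝ E] [TopologicalSpace E]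
  [IsTopologicalAddGroup E] [ContinuousSMul ℝ E] [T2Space E]

lemma isClosed_image_nonneg_of_injective_on (f : (ι → ℝ) →ₗ[ℝ] E) (s : Set ι)
    (hs : ∀ d, f d = 0 → support d ⊆ s → d = 0) :
    IsClosed (f '' {c | 0 ≤ c ∧ support c ⊆ s}) := by
  let V : Submodule ℝ (ι → ℝ) := Submodule.pi sᶜ fun _ => ⊥
  have hV : ∀ c, c ∈ V ↔ support c ⊆ s := fun c => by
    simp [V, Submodule.mem_pi, not_imp_comm]
  have hker : LinearMap.ker (f ∘ₗ V.subtype) = ⊥ :=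
    LinearMap.ker_eq_bot'.2 fun c hc => Subtype.ext (hs c hc ((hV c).1 c.2))
  have hset : f '' {c | 0 ≤ c ∧ support c ⊆ s} =
      (f ∘ₗ V.subtype) '' (V.subtype ⁻¹' Ici 0) := by
    ext y
    constructor
    · rintro ⟨c, ⟨hc, hcs⟩, rfl⟩
      exact ⟨⟨c, (hV c).2 hcs⟩, hc, rfl⟩
    · rintro ⟨c, hc, rfl⟩
      exact ⟨c, ⟨hc, (hV c).1 c.2⟩, rfl⟩
  rw [hset]
  exact (LinearMap.isClosedEmbedding_of_injective hker).isClosedMap _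
    (isClosed_Ici.preimage continuous_subtype_val)

theorem isClosed_image_nonneg (f : (ι → ℝ) →ₗ[ℝ] E) : IsClosed (f '' {c | 0 ≤ c}) := by
  have : f '' {c | 0 ≤ c} = ⋃ (s : Set ι) (_ : ∀ d, f d = 0 → support d ⊆ s → d = 0),
      f '' {c | 0 ≤ c ∧ support c ⊆ s} := by
    ext y
    simp only [mem_image, mem_iUnion, mem_ofPred_eq]
    constructor
    · rintro ⟨c, hc, rfl⟩
      obtain ⟨c', hc', hfc', hinj⟩ := exists_nonneg_eq_and_injective_on_support f hc
      exact ⟨support c', hinj, c', ⟨hc', subset_rfl⟩, hfc'⟩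
    · rintro ⟨s, -, c, ⟨hc, -⟩, rfl⟩
      exact ⟨c, hc, rfl⟩
  rw [this]
  exact isClosed_iUnion_of_finite fun s => isClosed_iUnion_of_finite fun hs =>
    isClosed_image_nonneg_of_injective_on f s hs

end Closed

theorem Matrix.farkas {κ ι : Type*} [Fintype κ] [Fintype ι] (M : Matrix κ ι ℝ) {v : κ → ℝ}
    (hv : ¬ ∃ c, 0 ≤ c ∧ M *ᵥ c = v) : ∃ y, 0 ≤ y ᵥ* M ∧ y ⬝ᵥ v < 0 := by
  classical
  let C : ProperCone ℝ (κ → ℝ) :=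
    ⟨(PointedCone.positive ℝ (ι → ℝ)).map M.mulVecLin, isClosed_image_nonneg M.mulVecLin⟩
  obtain ⟨f, hfC, hfv⟩ :=
    C.hyperplane_separation_point (x₀ := v) fun ⟨c, hc, hcv⟩ => hv ⟨c, hc, hcv⟩
  have hf : ∀ z, f z = (fun k => f (Pi.single k 1)) ⬝ᵥ z := fun z => by
    conv_lhs => rw [← Finset.univ_sum_single z]
    simp only [map_sum, dotProduct]
    refine Finset.sum_congr rfl fun k _ => ?_
    rw [mul_comm, ← smul_eq_mul, ← map_smul, ← Pi.single_smul', smul_eq_mul, mul_one]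
  refine ⟨fun k => f (Pi.single k 1), fun i => ?_, by rwa [← hf]⟩
  have := hfC (M *ᵥ Pi.single i 1) ⟨Pi.single i 1, Pi.single_nonneg.2 zero_le_one, rfl⟩
  rwa [hf, dotProduct_mulVec, dotProduct_single_one] at this

section Certificate

variable {κ ι : Type*} [Fintype ι]

/-- The homogenised certificate system: for `y = (u, t, s)`, `0 ≤ y ᵥ* M` and
`y ⬝ᵥ (0, 0, 1) < 0` say `Aᵀu + t + s ≥ 0` off `p`, `Aᵀu + t = 0` on `p` and `t + s ≥ 0 > s`,
so that `-Aᵀu / t` is a certificate. -/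
def certificateMatrix (A : Matrix κ ι ℝ) (p : ι → Prop) [DecidablePred p] :
    Matrix (κ ⊕ Fin 2) (ι ⊕ ι ⊕ Unit) ℝ :=
  of <| Sum.elim
    (fun r => Sum.elim (A r) (Sum.elim (fun i => if p i then -A r i else 0) fun _ => 0))
    ![Sum.elim (fun _ => 1) (Sum.elim (fun i => if p i then -1 else 0) fun _ => 1),
      Sum.elim (fun i => if p i then 0 else 1) (Sum.elim (fun _ => 0) fun _ => 1)]

lemma not_exists_nonneg_certificateMatrix_mulVec_eq (A : Matrix κ ι ℝ) (p : ι → Prop)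
    [DecidablePred p]
    (h : ∀ d, A *ᵥ d = 0 → (∀ i, ¬ p i → 0 ≤ d i) → d ≠ 0 → 0 < ∑ i, d i) :
    ¬ ∃ c, 0 ≤ c ∧ certificateMatrix A p *ᵥ c = Sum.elim (0 : κ → ℝ) ![0, 1] := by
  rintro ⟨c, hc, hMc⟩
  set γ := c (.inr (.inr ()))
  let d : ι → ℝ := fun i => c (.inl i) + if p i then -c (.inr (.inl i)) else 0
  have hAd : A *ᵥ d = 0 := funext fun r => by
    simpa [certificateMatrix, d, mulVec, dotProduct, Fintype.sum_sum_type, mul_add,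
      Finset.sum_add_distrib, mul_ite] using congrFun hMc (.inl r)
  have hsum : ∑ i, d i + γ = 0 := by
    simpa [certificateMatrix, d, mulVec, dotProduct, Fintype.sum_sum_type,
      Finset.sum_add_distrib, add_assoc] using congrFun hMc (.inr 0)
  have hoff : ∑ i, (if p i then 0 else c (.inl i)) + γ = 1 := by
    simpa [certificateMatrix, mulVec, dotProduct, Fintype.sum_sum_type]
      using congrFun hMc (.inr 1)
  have hd : ∀ i, ¬ p i → d i = c (.inl i) := fun i hi => by simp [d, hi]
  have hne : d ≠ 0 := by
    intro hd0
    have : ∑ i, (if p i then 0 else c (.inl i)) = 0 :=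
      Finset.sum_eq_zero fun i _ => by split_ifs with hi <;> simp [← hd i, *]
    simp only [hd0, Pi.zero_apply, Finset.sum_const_zero, zero_add] at hsum
    linarith
  have := h d hAd (fun i hi => (hd i hi).symm ▸ hc _) hne
  linarith [show 0 ≤ γ from hc _]

theorem Matrix.exists_transpose_mulVec_eq_one_and_lt_one [Fintype κ] (A : Matrix κ ι ℝ)
    (p : ι → Prop) (h : ∀ d, A *ᵥ d = 0 → (∀ i, ¬ p i → 0 ≤ d i) → d ≠ 0 → 0 < ∑ i, d i) :
    ∃ u, (∀ i, p i → (Aᵀ *ᵥ u) i = 1) ∧ ∀ i, ¬ p i → (Aᵀ *ᵥ u) i < 1 := by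
  classical
  obtain ⟨y, hy, hyv⟩ :=
    (certificateMatrix A p).farkas (not_exists_nonneg_certificateMatrix_mulVec_eq A p h)
  set t := y (.inr 0)
  set s := y (.inr 1)
  let S : ι → ℝ := fun i => ∑ r, y (.inl r) * A r i
  have hs : s < 0 := by
    simpa [certificateMatrix, dotProduct, Fintype.sum_sum_type] using hyv
  have hoff : ∀ i, ¬ p i → 0 ≤ S i + t + s := fun i hi => by
    simpa [certificateMatrix, vecMul, dotProduct, Fintype.sum_sum_type, hi, add_assoc]
      using hy (.inl i)
  have hon : ∀ i, p i → S i + t = 0 := fun i hi => by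
    have h₁ : 0 ≤ S i + t := by
      simpa [certificateMatrix, vecMul, dotProduct, Fintype.sum_sum_type, hi] using hy (.inl i)
    have h₂ : 0 ≤ -S i - t := by
      simpa [certificateMatrix, vecMul, dotProduct, Fintype.sum_sum_type, hi, S, sub_eq_add_neg]
        using hy (.inr (.inl i))
    linarith
  have ht : 0 < t := by
    have : 0 ≤ t + s := by
      simpa [certificateMatrix, vecMul, dotProduct, Fintype.sum_sum_type]
        using hy (.inr (.inr ()))
    linarith
  refine ⟨-t⁻¹ • fun r => y (.inl r), ?_⟩
  have hAu : ∀ i, (Aᵀ *ᵥ -t⁻¹ • fun r => y (.inl r)) i = -S i / t := by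
    intro i
    simp only [S, mulVec, dotProduct, transpose_apply, Pi.smul_apply, smul_eq_mul, neg_div,
      Finset.sum_div, ← Finset.sum_neg_distrib]
    exact Finset.sum_congr rfl fun r _ => by field_simp
  refine ⟨fun i hi => ?_, fun i hi => ?_⟩
  · rw [hAu, div_eq_one_iff_eq ht.ne']
    linarith [hon i hi]
  · rw [hAu, div_lt_one ht]
    linarith [hoff i hi]

end Certificate

lemma exists_pos_nonneg_add_smul {ι : Type*} [Finite ι] {x d : ι → ℝ} (hx : 0 ≤ x)
    (hd : ∀ i, ¬ 0 < x i → 0 ≤ d i) : ∃ ε : ℝ, 0 < ε ∧ 0 ≤ x + ε • d := by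
  have hev : ∀ i, ∀ᶠ ε in 𝓝[>] (0 : ℝ), 0 ≤ x i + ε * d i := by
    intro i
    by_cases hxi : 0 < x i
    · have : Tendsto (fun ε => x i + ε * d i) (𝓝 0) (𝓝 (x i)) :=
        (continuous_const.add (continuous_id.mul continuous_const)).tendsto' _ _ (by simp)
      exact nhdsWithin_le_nhds ((this.eventually (eventually_gt_nhds hxi)).mono fun _ => le_of_lt)
    · filter_upwards [self_mem_nhdsWithin] with ε hε
      exact add_nonneg (hx i) (mul_nonneg (le_of_lt hε) (hd i hxi))
  obtain ⟨ε, hε, hpos⟩ := ((eventually_all.2 hev).and self_mem_nhdsWithin).exists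
  exact ⟨ε, hpos, hε⟩

lemma sum_abs_eq_sum_of_nonneg {ι : Type*} [Fintype ι] {x : ι → ℝ} (hx : 0 ≤ x) :
    ∑ i, |x i| = ∑ i, x i :=
  Finset.sum_congr rfl fun i _ => abs_of_nonneg (hx i)

section LeastL1

variable {m n : ℕ} {A : Matrix (Fin m) (Fin n) ℝ} {b : Fin m → ℝ} {x : Fin n → ℝ}

lemma sum_pos_of_uniqueLeastL1 (hu : uniqueLeastL1 A b x) {d : Fin n → ℝ} (hAd : A *ᵥ d = 0)
    (hd : ∀ i, ¬ 0 < x i → 0 ≤ d i) (hne : d ≠ 0) : 0 < ∑ i, d i := by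
  obtain ⟨hAx, hx, hmin⟩ := hu
  obtain ⟨ε, hε, hw⟩ := exists_pos_nonneg_add_smul hx hd
  have hAw : A *ᵥ (x + ε • d) = b := by rw [mulVec_add, mulVec_smul, hAd, smul_zero, add_zero, hAx]
  have hlt := hmin _ hAw hw (by simpa [hε.ne'] using hne)
  rw [sum_abs_eq_sum_of_nonneg hx, sum_abs_eq_sum_of_nonneg hw] at hlt
  simp only [Pi.add_apply, Pi.smul_apply, smul_eq_mul, Finset.sum_add_distrib,
    ← Finset.mul_sum, lt_add_iff_pos_right] at hlt
  exact pos_of_mul_pos_right hlt hε.le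

lemma uniqueLeastL1_of_transpose_mulVec (hAx : A *ᵥ x = b) (hx : 0 ≤ x)
    (hsparsest : ∀ w, A *ᵥ w = b → 0 ≤ w → (support x).ncard ≤ (support w).ncard)
    (u : Fin m → ℝ) (hone : ∀ i, 0 < x i → (Aᵀ *ᵥ u) i = 1)
    (hlt : ∀ i, ¬ 0 < x i → (Aᵀ *ᵥ u) i < 1) :
    uniqueLeastL1 A b x := by
  refine ⟨hAx, hx, fun w hAw hw hne => ?_⟩
  have hdot : ∀ v, (Aᵀ *ᵥ u) ⬝ᵥ v = u ⬝ᵥ (A *ᵥ v) := fun v => by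
    rw [mulVec_transpose, dotProduct_mulVec]
  have hηx : (Aᵀ *ᵥ u) ⬝ᵥ x = ∑ i, x i := Finset.sum_congr rfl fun i _ => by
    by_cases hi : 0 < x i
    · simp [hone i hi]
    · simp [le_antisymm (not_lt.1 hi) (hx i)]
  have hle : ∀ i, (Aᵀ *ᵥ u) i * w i ≤ w i := fun i => by
    by_cases hi : 0 < x i
    · simp [hone i hi]
    · exact mul_le_of_le_one_left (hw i) (hlt i hi).le
  rw [sum_abs_eq_sum_of_nonneg hx, sum_abs_eq_sum_of_nonneg hw]
  by_cases hsupp : support w ⊆ support x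
  · refine absurd (sub_eq_zero.1 ?_) hne
    exact eq_zero_of_support_subset_of_minimal A.mulVecLin hx
      (fun c hc hAc => hsparsest c (hAc.trans hAx) hc) (by simp [mulVec_sub, hAw, hAx])
      ((support_sub _ _).trans (union_subset hsupp subset_rfl))
  · obtain ⟨k, hwk, hxk⟩ := not_subset.1 hsupp
    have hk : ¬ 0 < x k := fun h => hxk h.ne'
    have hwk_pos : 0 < w k := (hw k).lt_of_ne' hwk
    calc ∑ i, x i = (Aᵀ *ᵥ u) ⬝ᵥ w := by rw [← hηx, hdot, hdot, hAw, hAx]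
      _ < ∑ i, w i := Finset.sum_lt_sum (fun i _ => hle i)
          ⟨k, Finset.mem_univ k, mul_lt_of_lt_one_left hwk_pos (hlt k hk)⟩

end LeastL1

theorem stmt_9 {m n : ℕ} (A : Matrix (Fin m) (Fin n) ℝ) (b : Fin m → ℝ)
    (x : Fin n → ℝ) (hAx : A.mulVec x = b) (hx : 0 ≤ x)
    (hsparsest : ∀ w : Fin n → ℝ, A.mulVec w = b → 0 ≤ w →
      {i : Fin n | x i ≠ 0}.ncard ≤ {i : Fin n | w i ≠ 0}.ncard) :
    uniqueLeastL1 A b x ↔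
      ∃ η : Fin n → ℝ, (∃ u : Fin m → ℝ, A.transpose.mulVec u = η) ∧
        (∀ i, 0 < x i → η i = 1) ∧ (∀ i, ¬ 0 < x i → η i < 1) := by
  constructor
  · intro hu
    obtain ⟨u, hone, hlt⟩ := A.exists_transpose_mulVec_eq_one_and_lt_one (fun i => 0 < x i)
      fun d => sum_pos_of_uniqueLeastL1 hu
    exact ⟨_, ⟨u, rfl⟩, hone, hlt⟩
  · rintro ⟨η, ⟨u, rfl⟩, hone, hlt⟩
    exact uniqueLeastL1_of_transpose_mulVec hAx hx hsparsest u hone hlt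
end

section
/- Let A be a real m×n matrix, b ∈ ℝ^m, and let W = diag(w) where w ∈ ℝ^n with w > 0 componentwise. Let x be a nonnegative solution to Ax = b with J₊ = {i : xᵢ > 0}. Then x is the unique minimizer of ‖Wz‖₁ over {z : Az = b, z ≥ 0} if and only if (i) the column submatrix A_{J₊} has full column rank, and (ii) there exists η ∈ R(Aᵀ) such that ηᵢ = wᵢ for all i with xᵢ > 0 and ηᵢ < wᵢ for all i with xᵢ = 0. -/
/-!
On nonnegative vectors `‖W z‖₁ = w ⬝ᵥ z`, so the question is about the linear program
`min w ⬝ᵥ z` subject to `A z = b`, `z ≥ 0`. Sufficiency is weak duality: for `η = Aᵀ u`,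
`w ⬝ᵥ z ≥ η ⬝ᵥ z = η ⬝ᵥ x = w ⬝ᵥ x`, with equality only when `z` vanishes off the support of `x`,
and then `z = x` because the columns of `A` on that support are independent.

Conversely, uniqueness makes `w ⬝ᵥ v > 0` for every nonzero `v ∈ ker A` that is nonnegative off the
support. Applied to `±v` for `v ∈ ker A` vanishing off the support, this gives the independence
of the columns. A strictly complementary certificate `η` then comes from a Gordan-type alternative (a
Hahn–Banach separation): if none existed, the alternative would produce a direction `v` violating
the positivity above.
-/

open Matrix Filter Topology

theorem nonpos_of_forall_pos_add_mul_le {α β c : ℝ} (h : ∀ r : ℝ, 0 < r → α + r * β ≤ c) :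
    β ≤ 0 := by
  by_contra! hβ
  have := h ((|c - α| + 1) / β) (by positivity)
  rw [div_mul_cancel₀ _ hβ.ne'] at this
  linarith [le_abs_self (c - α)]

theorem eq_zero_of_forall_add_mul_le {α β c : ℝ} (h : ∀ r : ℝ, α + r * β ≤ c) : β = 0 :=
  le_antisymm (nonpos_of_forall_pos_add_mul_le fun r _ ↦ h r)
    (neg_nonpos.1 <| nonpos_of_forall_pos_add_mul_le fun r _ ↦ by simpa using h (-r))

theorem nonneg_of_forall_pos_mul_lt {β c : ℝ} (h : ∀ r : ℝ, 0 < r → r * β < c) : 0 ≤ c := by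
  by_contra! hc
  have hβ : β < 0 := by linarith [h 1 one_pos]
  have := h (c / (2 * β)) (div_pos_of_neg_of_neg hc (by linarith))
  rw [div_mul_eq_mul_div, mul_div_mul_right _ _ hβ.ne] at this
  linarith

theorem forall_nonpos_of_dotProduct_lt_of_pos {ι : Type*} [Fintype ι] {p : ι → Prop}
    {φ : ι → ℝ} {c : ℝ} (h : ∀ μ : ι → ℝ, (∀ i, p i → 0 < μ i) → φ ⬝ᵥ μ < c) :
    (∀ i, φ i ≤ 0) ∧ (∀ i, ¬ p i → φ i = 0) ∧ 0 ≤ c := by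
  classical
  have hray : ∀ i (r : ℝ), (p i → 0 ≤ r) → φ ⬝ᵥ 1 + r * φ i < c := fun i r hr ↦ by
    have hpos : ∀ j, p j → 0 < (1 + r • Pi.single i 1 : ι → ℝ) j := fun j hj ↦ by
      rcases eq_or_ne j i with rfl | hji
      · simpa using add_pos_of_pos_of_nonneg one_pos (hr hj)
      · simp [hji]
    simpa [dotProduct_add] using h _ hpos
  have hφ_off : ∀ i, ¬ p i → φ i = 0 := fun i hi ↦
    eq_zero_of_forall_add_mul_le fun r ↦ (hray i r (absurd · hi)).le
  refine ⟨fun i ↦ ?_, hφ_off, nonneg_of_forall_pos_mul_lt (β := φ ⬝ᵥ 1) fun r hr ↦ ?_⟩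
  · by_cases hi : p i
    · exact nonpos_of_forall_pos_add_mul_le fun r hr ↦ (hray i r fun _ ↦ hr.le).le
    · exact (hφ_off i hi).le
  · simpa using h (r • 1) fun i _ ↦ by simpa using hr

-- A Gordan-type theorem of the alternative, proved by separating `a + L` from the open cone
-- `{μ | ∀ i, p i → 0 < μ i}`.
theorem exists_nonneg_orthogonal_of_forall_exists_add_nonpos {ι : Type*} [Fintype ι]
    (p : ι → Prop) (a : ι → ℝ) (L : Submodule ℝ (ι → ℝ))
    (h : ∀ ℓ ∈ L, ∃ i, p i ∧ a i + ℓ i ≤ 0) :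
    ∃ v : ι → ℝ, v ≠ 0 ∧ 0 ≤ v ∧ (∀ i, ¬ p i → v i = 0) ∧ (∀ ℓ ∈ L, v ⬝ᵥ ℓ = 0) ∧
      v ⬝ᵥ a ≤ 0 := by
  classical
  set s : Set (ι → ℝ) := Set.pi {i | p i} fun _ ↦ Set.Ioi 0
  have hdisj : Disjoint s ((a + ·) '' L) := by
    rw [Set.disjoint_right]
    rintro _ ⟨ℓ, hℓ, rfl⟩ hs
    obtain ⟨i, hi, hle⟩ := h ℓ hℓ
    exact hle.not_gt (hs i hi)
  obtain ⟨f, c, hfs, hft⟩ := geometric_hahn_banach_open (convex_pi fun _ _ ↦ convex_Ioi 0)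
    (isOpen_set_pi (Set.toFinite _) fun _ _ ↦ isOpen_Ioi) (L.convex.translate a) hdisj
  set φ := (dotProductEquiv ℝ ι).symm f.toLinearMap
  have hf : ∀ μ, f μ = φ ⬝ᵥ μ := fun μ ↦ by
    simp [φ, ← dotProductEquiv_apply_apply, LinearEquiv.apply_symm_apply]
  obtain ⟨hφ_nonpos, hφ_off, hc⟩ :=
    forall_nonpos_of_dotProduct_lt_of_pos fun μ hμ ↦ (hf μ).symm.trans_lt (hfs μ hμ)
  have hφa : c ≤ φ ⬝ᵥ a := by simpa [hf] using hft a ⟨0, L.zero_mem, add_zero a⟩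
  have hφ : φ ≠ 0 := by
    intro hφ
    have := hfs 1 fun _ _ ↦ Set.mem_Ioi.2 one_pos
    simp only [hf, hφ, zero_dotProduct] at this hφa
    linarith
  refine ⟨-φ, neg_ne_zero.2 hφ, fun i ↦ neg_nonneg.2 (hφ_nonpos i),
    fun i hi ↦ by simp [hφ_off i hi], fun ℓ hℓ ↦ ?_, by simpa using hc.trans hφa⟩
  rw [neg_dotProduct, neg_eq_zero]
  refine eq_zero_of_forall_add_mul_le (α := -(φ ⬝ᵥ a)) (c := -c) fun r ↦ ?_
  have := hft _ ⟨(-r) • ℓ, L.smul_mem (-r) hℓ, rfl⟩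
  simp only [hf, dotProduct_add, dotProduct_smul, smul_eq_mul, neg_mul] at this
  linarith

theorem exists_pos_add_smul_nonneg {ι : Type*} [Finite ι] {x v : ι → ℝ} (hx : 0 ≤ x)
    (hv : ∀ i, x i = 0 → 0 ≤ v i) : ∃ ε : ℝ, 0 < ε ∧ 0 ≤ x + ε • v := by
  have h : ∀ᶠ ε in 𝓝[>] (0 : ℝ), 0 < ε ∧ ∀ i, 0 ≤ x i + ε * v i := by
    refine eventually_mem_nhdsWithin.and (eventually_all.2 fun i ↦ ?_)
    rcases (show (0 : ℝ) ≤ x i from hx i).eq_or_lt' with hxi | hxi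
    · filter_upwards [eventually_mem_nhdsWithin] with ε hε
      rw [hxi, zero_add]
      exact mul_nonneg (le_of_lt hε) (hv i hxi)
    · have : Tendsto (fun ε : ℝ ↦ x i + ε * v i) (𝓝 0) (𝓝 (x i)) :=
        (continuous_const.add (continuous_id.mul continuous_const)).tendsto' 0 (x i) (by simp)
      exact ((this.eventually (lt_mem_nhds hxi)).filter_mono nhdsWithin_le_nhds).mono
        fun _ ↦ le_of_lt
  obtain ⟨ε, hε, hnn⟩ := h.exists
  exact ⟨ε, hε, fun i ↦ hnn i⟩

theorem Matrix.exists_mulVec_eq_of_forall_dotProduct_eq_zero {ι κ : Type*} [Fintype ι]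
    [Fintype κ] (B : Matrix κ ι ℝ) (y : κ → ℝ) (h : ∀ c, Bᵀ *ᵥ c = 0 → c ⬝ᵥ y = 0) :
    ∃ t, B *ᵥ t = y := by
  classical
  have hy : WithLp.toLp 2 y ∈ (LinearMap.ker Bᵀ.toEuclideanLin)ᗮ := by
    refine (Submodule.mem_orthogonal _ _).2 fun c hc ↦ ?_
    have := h c.ofLp (by simpa using congrArg WithLp.ofLp hc)
    simpa [EuclideanSpace.inner_eq_star_dotProduct, dotProduct_comm] using this
  rw [LinearMap.orthogonal_ker, ← toEuclideanLin_conjTranspose_eq_adjoint,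
    conjTranspose_eq_transpose_of_trivial, transpose_transpose] at hy
  obtain ⟨t, ht⟩ := hy
  exact ⟨t.ofLp, by simpa using congrArg WithLp.ofLp ht⟩

section ColumnSubmatrix

variable {ι κ : Type*} [Fintype ι] (A : Matrix κ ι ℝ) (p : ι → Prop) [DecidablePred p]

theorem Matrix.mulVec_eq_submatrix_mulVec {v : ι → ℝ} (hv : ∀ i, ¬ p i → v i = 0) :
    A *ᵥ v = A.submatrix id (Subtype.val : {i // p i} → ι) *ᵥ (v ∘ Subtype.val) := by
  ext k
  have hoff : ∑ i : {i // ¬ p i}, A k i * v i = 0 :=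
    Finset.sum_eq_zero fun i _ ↦ by simp [hv i.1 i.2]
  simp only [mulVec, dotProduct]
  rw [← Fintype.sum_subtype_add_sum_subtype p, hoff, add_zero]
  rfl

theorem Matrix.submatrix_mulVec_eq_mulVec_extend (t : {i // p i} → ℝ) :
    A.submatrix id Subtype.val *ᵥ t = A *ᵥ Function.extend Subtype.val t 0 := by
  rw [mulVec_eq_submatrix_mulVec A p fun _ ↦ Function.extend_val_apply',
    Function.extend_comp Subtype.val_injective]

theorem Matrix.linearIndependent_submatrix_col_iff :
    LinearIndependent ℝ (A.submatrix id (Subtype.val : {i // p i} → ι)).col ↔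
      ∀ v, A *ᵥ v = 0 → (∀ i, ¬ p i → v i = 0) → v = 0 := by
  rw [← mulVec_injective_iff, ← coe_mulVecLin, injective_iff_map_eq_zero]
  simp only [mulVecLin_apply]
  constructor
  · intro h v hAv hv
    have hvS := h _ (by rw [← mulVec_eq_submatrix_mulVec A p hv, hAv])
    funext i
    by_cases hi : p i
    · exact congrFun hvS ⟨i, hi⟩
    · exact hv i hi
  · intro h t ht
    rw [submatrix_mulVec_eq_mulVec_extend] at ht
    rw [← Function.extend_comp Subtype.val_injective t 0,
      h _ ht fun _ ↦ Function.extend_val_apply']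
    rfl

variable [Fintype κ]

theorem Matrix.exists_transpose_mulVec_eq_of_linearIndependent
    (hA : LinearIndependent ℝ (A.submatrix id (Subtype.val : {i // p i} → ι)).col)
    (w : ι → ℝ) : ∃ u, ∀ i, p i → (Aᵀ *ᵥ u) i = w i := by
  obtain ⟨u, hu⟩ := exists_mulVec_eq_of_forall_dotProduct_eq_zero
    (A.submatrix id (Subtype.val : {i // p i} → ι))ᵀ (w ∘ Subtype.val) fun c hc ↦ by
      rw [mulVec_injective_iff.2 hA (hc.trans (mulVec_zero _).symm), zero_dotProduct]
  exact ⟨u, fun i hi ↦ congrFun hu ⟨i, hi⟩⟩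

theorem Matrix.exists_mulVec_eq_of_forall_dotProduct_eq_zero_on (y : κ → ℝ)
    (h : ∀ c, (∀ i, p i → (Aᵀ *ᵥ c) i = 0) → c ⬝ᵥ y = 0) :
    ∃ ξ, (∀ i, ¬ p i → ξ i = 0) ∧ A *ᵥ ξ = y := by
  obtain ⟨t, ht⟩ := exists_mulVec_eq_of_forall_dotProduct_eq_zero
    (A.submatrix id (Subtype.val : {i // p i} → ι)) y fun c hc ↦
      h c fun i hi ↦ congrFun hc ⟨i, hi⟩
  exact ⟨_, fun _ ↦ Function.extend_val_apply',
    (submatrix_mulVec_eq_mulVec_extend A p t).symm.trans ht⟩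

end ColumnSubmatrix

section NonnegativeMinimizer

variable {ι κ : Type*} [Fintype ι] (A : Matrix κ ι ℝ) (w : ι → ℝ) {x : ι → ℝ}

-- Compare `x` with the feasible point `x + ε • v` for a small `ε > 0`.
theorem dotProduct_pos_of_forall_dotProduct_lt (hx : 0 ≤ x)
    (huniq : ∀ z, A *ᵥ z = A *ᵥ x → 0 ≤ z → z ≠ x → w ⬝ᵥ x < w ⬝ᵥ z) {v : ι → ℝ}
    (hAv : A *ᵥ v = 0) (hv : ∀ i, x i = 0 → 0 ≤ v i) (hv0 : v ≠ 0) : 0 < w ⬝ᵥ v := by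
  obtain ⟨ε, hε, hnn⟩ := exists_pos_add_smul_nonneg hx hv
  have hlt := huniq (x + ε • v) (by simp [mulVec_add, mulVec_smul, hAv]) hnn
    (by simpa [hε.ne'] using hv0)
  rw [dotProduct_add, dotProduct_smul, smul_eq_mul, lt_add_iff_pos_right] at hlt
  exact pos_of_mul_pos_right hlt hε.le

theorem linearIndependent_of_dotProduct_pos
    (hpos : ∀ v, A *ᵥ v = 0 → (∀ i, x i = 0 → 0 ≤ v i) → v ≠ 0 → 0 < w ⬝ᵥ v) :
    LinearIndependent ℝ (A.submatrix id (Subtype.val : {i // 0 < x i} → ι)).col := by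
  refine (linearIndependent_submatrix_col_iff A _).2 fun v hAv hv ↦ ?_
  by_contra hv0
  have hvT : ∀ i, x i = 0 → v i = 0 := fun i hi ↦ hv i hi.not_gt
  have h₁ := hpos v hAv (fun i hi ↦ (hvT i hi).ge) hv0
  have h₂ := hpos (-v) (by rw [mulVec_neg, hAv, neg_zero])
    (fun i hi ↦ by simp [hvT i hi]) (neg_ne_zero.2 hv0)
  rw [dotProduct_neg] at h₂
  linarith

variable [Fintype κ]

-- `v` is corrected by some `ξ` supported on `{i | 0 < x i}` into a kernel direction `v + ξ`,
-- on which `w` and `w - Aᵀ *ᵥ u` have the same product.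
theorem dotProduct_sub_transpose_mulVec_pos
    (hpos : ∀ v, A *ᵥ v = 0 → (∀ i, x i = 0 → 0 ≤ v i) → v ≠ 0 → 0 < w ⬝ᵥ v)
    {u : κ → ℝ} (hu : ∀ i, 0 < x i → (Aᵀ *ᵥ u) i = w i) {v : ι → ℝ} (hv0 : v ≠ 0) (hv : 0 ≤ v)
    (hv_supp : ∀ i, x i ≠ 0 → v i = 0)
    (hv_orth : ∀ c, (∀ i, 0 < x i → (Aᵀ *ᵥ c) i = 0) → v ⬝ᵥ Aᵀ *ᵥ c = 0) :
    0 < v ⬝ᵥ (w - Aᵀ *ᵥ u) := by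
  obtain ⟨ξ, hξ_supp, hAξ⟩ := exists_mulVec_eq_of_forall_dotProduct_eq_zero_on A
    (fun i ↦ 0 < x i) (-(A *ᵥ v)) fun c hc ↦ by
      rw [dotProduct_neg, dotProduct_mulVec, ← mulVec_transpose, dotProduct_comm, hv_orth c hc,
        neg_zero]
  have hAvξ : A *ᵥ (v + ξ) = 0 := by rw [mulVec_add, hAξ, add_neg_cancel]
  have hξT : ∀ i, x i = 0 → ξ i = 0 := fun i hi ↦ hξ_supp i hi.not_gt
  have hvξ : v + ξ ≠ 0 := by
    obtain ⟨i, hi⟩ := Function.ne_iff.1 hv0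
    have hxi : x i = 0 := by_contra fun h ↦ hi (hv_supp i h)
    exact Function.ne_iff.2 ⟨i, by simpa [hξT i hxi] using hi⟩
  have hξ_orth : (w - Aᵀ *ᵥ u) ⬝ᵥ ξ = 0 := Finset.sum_eq_zero fun i _ ↦ by
    by_cases hi : 0 < x i
    · simp [hu i hi]
    · simp [hξ_supp i hi]
  calc 0 < w ⬝ᵥ (v + ξ) := hpos _ hAvξ (fun i hi ↦ by simpa [hξT i hi] using hv i) hvξ
    _ = (w - Aᵀ *ᵥ u) ⬝ᵥ (v + ξ) := by
      rw [sub_dotProduct, mulVec_transpose, ← dotProduct_mulVec, hAvξ, dotProduct_zero, sub_zero]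
    _ = v ⬝ᵥ (w - Aᵀ *ᵥ u) := by rw [dotProduct_add, hξ_orth, add_zero, dotProduct_comm]

theorem exists_dual_certificate
    (hpos : ∀ v, A *ᵥ v = 0 → (∀ i, x i = 0 → 0 ≤ v i) → v ≠ 0 → 0 < w ⬝ᵥ v) :
    ∃ u, (∀ i, 0 < x i → (Aᵀ *ᵥ u) i = w i) ∧ ∀ i, x i = 0 → (Aᵀ *ᵥ u) i < w i := by
  obtain ⟨u₀, hu₀⟩ := exists_transpose_mulVec_eq_of_linearIndependent A _
    (linearIndependent_of_dotProduct_pos A w hpos) w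
  let L : Submodule ℝ (ι → ℝ) :=
    LinearMap.range Aᵀ.mulVecLin ⊓ ⨅ (i) (_ : 0 < x i), LinearMap.ker (LinearMap.proj i)
  have mem_L : ∀ c : κ → ℝ, (∀ i, 0 < x i → (Aᵀ *ᵥ c) i = 0) → Aᵀ *ᵥ c ∈ L := fun c hc ↦
    ⟨⟨c, rfl⟩, Submodule.mem_iInf _ |>.2 fun i ↦ Submodule.mem_iInf _ |>.2 fun hi ↦ hc i hi⟩
  by_contra! hno
  have h : ∀ ℓ ∈ L, ∃ i, x i = 0 ∧ (w - Aᵀ *ᵥ u₀) i + ℓ i ≤ 0 := by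
    rintro ℓ ⟨⟨c, rfl⟩, hc⟩
    simp only [SetLike.mem_coe, Submodule.mem_iInf, LinearMap.mem_ker, LinearMap.proj_apply,
      mulVecLin_apply] at hc
    obtain ⟨i, hi, hle⟩ := hno (u₀ - c) fun i hi ↦ by simp [mulVec_sub, hu₀ i hi, hc i hi]
    exact ⟨i, hi, by simp only [mulVec_sub, Pi.sub_apply, mulVecLin_apply] at hle ⊢; linarith⟩
  obtain ⟨v, hv0, hv, hv_supp, hv_orth, hva⟩ :=
    exists_nonneg_orthogonal_of_forall_exists_add_nonpos _ _ L h
  exact hva.not_gt <| dotProduct_sub_transpose_mulVec_pos A w hpos hu₀ hv0 hv hv_supp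
    fun c hc ↦ hv_orth _ (mem_L c hc)

theorem dotProduct_lt_of_dual_certificate (hx : 0 ≤ x)
    (hA : LinearIndependent ℝ (A.submatrix id (Subtype.val : {i // 0 < x i} → ι)).col)
    {u : κ → ℝ} (hS : ∀ i, 0 < x i → (Aᵀ *ᵥ u) i = w i) (hT : ∀ i, x i = 0 → (Aᵀ *ᵥ u) i < w i)
    {z : ι → ℝ} (hAz : A *ᵥ z = A *ᵥ x) (hz : 0 ≤ z) (hzx : z ≠ x) : w ⬝ᵥ x < w ⬝ᵥ z := by
  have hx0 : ∀ i, ¬ 0 < x i → x i = 0 := fun i hi ↦ le_antisymm (not_lt.1 hi) (hx i)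
  obtain ⟨j, hxj, hzj⟩ : ∃ j, x j = 0 ∧ z j ≠ 0 := by
    by_contra! hzT
    refine hzx (sub_eq_zero.1 ((linearIndependent_submatrix_col_iff A _).1 hA (z - x)
      (by rw [mulVec_sub, hAz, sub_self]) fun i hi ↦ ?_))
    simp [hx0 i hi, hzT i (hx0 i hi)]
  calc w ⬝ᵥ x = (Aᵀ *ᵥ u) ⬝ᵥ x := Finset.sum_congr rfl fun i _ ↦ by
        by_cases hi : 0 < x i
        · rw [hS i hi]
        · simp [hx0 i hi]
    _ = (Aᵀ *ᵥ u) ⬝ᵥ z := by rw [mulVec_transpose, ← dotProduct_mulVec, ← dotProduct_mulVec, hAz]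
    _ < w ⬝ᵥ z := by
      refine Finset.sum_lt_sum (fun i _ ↦ ?_) ⟨j, Finset.mem_univ j,
        mul_lt_mul_of_pos_right (hT j hxj) ((hz j).lt_of_ne' hzj)⟩
      by_cases hi : 0 < x i
      · rw [hS i hi]
      · exact mul_le_mul_of_nonneg_right (hT i (hx0 i hi)).le (hz i)

theorem forall_dotProduct_lt_iff (hx : 0 ≤ x) :
    (∀ z, A *ᵥ z = A *ᵥ x → 0 ≤ z → z ≠ x → w ⬝ᵥ x < w ⬝ᵥ z) ↔
      LinearIndependent ℝ (A.submatrix id (Subtype.val : {i // 0 < x i} → ι)).col ∧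
        ∃ u, (∀ i, 0 < x i → (Aᵀ *ᵥ u) i = w i) ∧ ∀ i, x i = 0 → (Aᵀ *ᵥ u) i < w i := by
  refine ⟨fun huniq ↦ ?_, fun ⟨hA, u, hS, hT⟩ z hAz hz hzx ↦
    dotProduct_lt_of_dual_certificate A w hx hA hS hT hAz hz hzx⟩
  have hpos := fun v ↦ dotProduct_pos_of_forall_dotProduct_lt A w hx huniq (v := v)
  exact ⟨linearIndependent_of_dotProduct_pos A w hpos,
    exists_dual_certificate A w hpos⟩

end NonnegativeMinimizer

theorem stmt_11_general {m n : ℕ} (A : Matrix (Fin m) (Fin n) ℝ) (b : Fin m → ℝ)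
    (w : Fin n → ℝ)
    (x : Fin n → ℝ) (hAx : A.mulVec x = b) (hx : 0 ≤ x) :
    (∀ z : Fin n → ℝ, A.mulVec z = b → 0 ≤ z → z ≠ x →
        ∑ i, w i * |x i| < ∑ i, w i * |z i|) ↔
      (LinearIndependent ℝ (fun j : {i : Fin n // 0 < x i} =>
          fun k : Fin m => A k j.1) ∧
       ∃ η : Fin n → ℝ, (∃ u : Fin m → ℝ, A.transpose.mulVec u = η) ∧
         (∀ i, 0 < x i → η i = w i) ∧ (∀ i, x i = 0 → η i < w i)) := by
  have weighted_norm_eq : ∀ z : Fin n → ℝ, 0 ≤ z → ∑ i, w i * |z i| = w ⬝ᵥ z := fun z hz ↦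
    Finset.sum_congr rfl fun i _ ↦ by rw [abs_of_nonneg (hz i)]
  subst hAx
  rw [exists_exists_eq_and]
  refine Iff.trans (forall_congr' fun z ↦ imp_congr_right fun _ ↦ forall_congr' fun hz ↦ ?_)
    (forall_dotProduct_lt_iff A w hx)
  rw [weighted_norm_eq x hx, weighted_norm_eq z hz]

theorem stmt_11 {m n : ℕ} (A : Matrix (Fin m) (Fin n) ℝ) (b : Fin m → ℝ)
    (w : Fin n → ℝ) (hw : ∀ i, 0 < w i)
    (x : Fin n → ℝ) (hAx : A.mulVec x = b) (hx : 0 ≤ x) :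
    (∀ z : Fin n → ℝ, A.mulVec z = b → 0 ≤ z → z ≠ x →
        ∑ i, w i * |x i| < ∑ i, w i * |z i|) ↔
      (LinearIndependent ℝ (fun j : {i : Fin n // 0 < x i} =>
          fun k : Fin m => A k j.1) ∧
       ∃ η : Fin n → ℝ, (∃ u : Fin m → ℝ, A.transpose.mulVec u = η) ∧
         (∀ i, 0 < x i → η i = w i) ∧ (∀ i, x i = 0 → η i < w i)) :=
  stmt_11_general A b w x hAx hx
end
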